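/- arXiv:1403.0625 — 3 statements merged into one kernel-verified Lean document; each statement's English description precedes it below -/
import Mathlib

section
/- If p and q are probability densities on a measure space with p/q bounded, then the Kullback-Leibler divergence satisfies K(p,q) ≤ 2 h²(p,q) · ‖p/q‖_∞, where h²(p,q) = ∫(√p − √q)² dμ is the squared Hellinger distance. -/
/-!
Write `t = p / q`. Since `∫ p = ∫ q`, the divergence equals `∫ q · klFun t` with
`klFun t = t log t + 1 - t ≥ 0`, while the Hellinger integrand is `q (√t - 1)²`. So it suffices
that `klFun t ≤ 2 (√t - 1)² max t 1` pointwise, together with `‖p/q‖_∞ ≥ 1` (forced by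
`∫ p = ∫ q`). With `t = s²`, for `s ≥ 1` this follows from `log s ≤ sinh (log s)`; for `s ≤ 1`,
the difference `2 (s - 1)² - klFun (s²)` has derivative `-4 klFun s ≤ 0` and vanishes at `s = 1`.
-/

open MeasureTheory Real InformationTheory Set

lemma log_le_half_sub_inv {s : ℝ} (hs : 1 ≤ s) : log s ≤ (s - s⁻¹) / 2 := by
  rw [← sinh_log (by linarith)]
  exact self_le_sinh_iff.mpr (log_nonneg hs)

lemma klFun_sq_le_of_one_le {s : ℝ} (hs : 1 ≤ s) : klFun (s ^ 2) ≤ 2 * s ^ 2 * (s - 1) ^ 2 := by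
  have hlog := log_le_half_sub_inv hs
  have hinv : s * s⁻¹ = 1 := mul_inv_cancel₀ (by positivity)
  rw [klFun_apply, log_pow]
  push_cast
  nlinarith [mul_le_mul_of_nonneg_left hlog (by positivity : (0:ℝ) ≤ 2 * s ^ 2)]

lemma hasDerivAt_klFun_sq {s : ℝ} (hs : s ≠ 0) :
    HasDerivAt (fun x ↦ klFun (x ^ 2)) (4 * s * log s) s := by
  refine ((hasDerivAt_klFun (pow_ne_zero 2 hs)).comp_of_eq s (hasDerivAt_pow 2 s) rfl)
    |>.congr_deriv ?_
  rw [log_pow]; push_cast; ring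

lemma klFun_sq_le_of_le_one {s : ℝ} (h0 : 0 ≤ s) (h1 : s ≤ 1) :
    klFun (s ^ 2) ≤ 2 * (s - 1) ^ 2 := by
  set g : ℝ → ℝ := fun x ↦ 2 * (x - 1) ^ 2 - klFun (x ^ 2)
  have hg : ∀ x ∈ interior (Icc (0 : ℝ) 1), HasDerivAt g (-4 * klFun x) x := by
    rw [interior_Icc]
    intro x hx
    refine ((((hasDerivAt_id x).sub_const 1).fun_pow 2).const_mul 2
      |>.sub (hasDerivAt_klFun_sq hx.1.ne')).congr_deriv ?_
    rw [klFun_apply, id]; ring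
  have hanti : AntitoneOn g (Icc 0 1) := by
    refine antitoneOn_of_deriv_nonpos (convex_Icc 0 1) (by fun_prop)
      (fun x hx ↦ (hg x hx).differentiableAt.differentiableWithinAt) fun x hx ↦ ?_
    rw [(hg x hx).deriv]
    have := klFun_nonneg (interior_subset hx).1
    linarith
  have := hanti ⟨h0, h1⟩ ⟨zero_le_one, le_rfl⟩ h1
  simp only [g, one_pow, klFun_one] at this
  linarith

lemma klFun_le_two_mul_sqrt_sub_one_sq_mul_max {t : ℝ} (ht : 0 ≤ t) :
    klFun t ≤ 2 * (√t - 1) ^ 2 * max t 1 := by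
  obtain ⟨s, hs, rfl⟩ : ∃ s, 0 ≤ s ∧ s ^ 2 = t := ⟨√t, sqrt_nonneg t, sq_sqrt ht⟩
  rw [sqrt_sq hs]
  rcases le_total s 1 with h1 | h1
  · rw [max_eq_right (pow_le_one₀ hs h1), mul_one]
    exact klFun_sq_le_of_le_one hs h1
  · rw [max_eq_left (one_le_pow₀ h1)]
    linarith [klFun_sq_le_of_one_le h1]

lemma mul_klFun_div_eq {a b : ℝ} (hb : b ≠ 0) :
    b * klFun (a / b) = a * log (a / b) + b - a := by
  rw [klFun_apply]; field_simp

lemma mul_klFun_div_le {a b B : ℝ} (ha : 0 ≤ a) (hb : 0 < b) (hB : a / b ≤ B) (hB1 : 1 ≤ B) :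
    b * klFun (a / b) ≤ 2 * B * (√a - √b) ^ 2 := by
  have ht : 0 ≤ a / b := div_nonneg ha hb.le
  have hsq : (√a - √b) ^ 2 = b * (√(a / b) - 1) ^ 2 := by
    rw [sqrt_div' _ hb.le]
    field_simp
    rw [sq_sqrt hb.le, mul_comm]
  calc b * klFun (a / b) ≤ b * (2 * (√(a / b) - 1) ^ 2 * max (a / b) 1) :=
        mul_le_mul_of_nonneg_left (klFun_le_two_mul_sqrt_sub_one_sq_mul_max ht) hb.le
    _ ≤ b * (2 * (√(a / b) - 1) ^ 2 * B) := by gcongr; exact max_le hB hB1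
    _ = 2 * B * (√a - √b) ^ 2 := by rw [hsq]; ring

section Densities

variable {Ω : Type*} [MeasurableSpace Ω] {μ : Measure Ω} {p q : Ω → ℝ}

lemma one_le_of_ae_div_le {B : ℝ} (hp : Integrable p μ) (hq : Integrable q μ)
    (hq0 : ∀ᵐ x ∂μ, 0 < q x) (hpint : ∫ x, p x ∂μ = 1) (hqint : ∫ x, q x ∂μ = 1)
    (hB : ∀ᵐ x ∂μ, p x / q x ≤ B) : 1 ≤ B := by
  have hle : ∀ᵐ x ∂μ, p x ≤ B * q x := by
    filter_upwards [hq0, hB] with x hqx hBx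
    exact (div_le_iff₀ hqx).mp hBx
  simpa [hpint, integral_const_mul, hqint] using integral_mono_ae hp (hq.const_mul B) hle

lemma integrable_sqrt_sub_sqrt_sq (hp : Integrable p μ) (hq : Integrable q μ)
    (hp0 : ∀ᵐ x ∂μ, 0 ≤ p x) (hq0 : ∀ᵐ x ∂μ, 0 ≤ q x) :
    Integrable (fun x ↦ (√(p x) - √(q x)) ^ 2) μ := by
  refine (hp.add hq).mono' ?_ ?_
  · exact ((continuous_sqrt.comp_aestronglyMeasurable hp.1).sub
      (continuous_sqrt.comp_aestronglyMeasurable hq.1)).pow 2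
  · filter_upwards [hp0, hq0] with x hpx hqx
    rw [norm_of_nonneg (sq_nonneg _), Pi.add_apply]
    nlinarith [sq_sqrt hpx, sq_sqrt hqx, sqrt_nonneg (p x), sqrt_nonneg (q x)]

lemma integral_mul_log_div_eq_integral_mul_klFun (hp : Integrable p μ) (hq : Integrable q μ)
    (hq0 : ∀ᵐ x ∂μ, 0 < q x) (hpq : ∫ x, p x ∂μ = ∫ x, q x ∂μ)
    (hkl : Integrable (fun x ↦ q x * klFun (p x / q x)) μ) :
    ∫ x, p x * log (p x / q x) ∂μ = ∫ x, q x * klFun (p x / q x) ∂μ := by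
  have hkl_eq : (fun x ↦ q x * klFun (p x / q x)) =ᵐ[μ]
      fun x ↦ p x * log (p x / q x) + q x - p x := by
    filter_upwards [hq0] with x hqx using mul_klFun_div_eq hqx.ne'
  have hf : Integrable (fun x ↦ p x * log (p x / q x)) μ :=
    (((hkl.congr hkl_eq).sub hq).add hp).congr (ae_of_all _ fun x ↦ by
      simp only [Pi.add_apply, Pi.sub_apply]; ring)
  have hfq : Integrable (fun x ↦ p x * log (p x / q x) + q x) μ := hf.add hq
  rw [integral_congr_ae hkl_eq, integral_sub hfq hp, integral_add hf hq, hpq]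
  ring

lemma integrable_mul_klFun_div {B : ℝ} (hp : Integrable p μ) (hq : Integrable q μ)
    (hp0 : ∀ᵐ x ∂μ, 0 ≤ p x) (hq0 : ∀ᵐ x ∂μ, 0 < q x) (hB : ∀ᵐ x ∂μ, p x / q x ≤ B)
    (hB1 : 1 ≤ B) : Integrable (fun x ↦ q x * klFun (p x / q x)) μ := by
  refine ((integrable_sqrt_sub_sqrt_sq hp hq hp0 (hq0.mono fun _ ↦ le_of_lt)).const_mul
    (2 * B)).mono' ?_ ?_
  · exact hq.1.mul (continuous_klFun.comp_aestronglyMeasurable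
      (hp.aemeasurable.div hq.aemeasurable).aestronglyMeasurable)
  · filter_upwards [hp0, hq0, hB] with x hpx hqx hBx
    rw [norm_of_nonneg (mul_nonneg hqx.le (klFun_nonneg (div_nonneg hpx hqx.le)))]
    exact mul_klFun_div_le hpx hqx hBx hB1

lemma integral_mul_klFun_div_le {B : ℝ} (hp : Integrable p μ) (hq : Integrable q μ)
    (hp0 : ∀ᵐ x ∂μ, 0 ≤ p x) (hq0 : ∀ᵐ x ∂μ, 0 < q x) (hB : ∀ᵐ x ∂μ, p x / q x ≤ B)
    (hB1 : 1 ≤ B) :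
    ∫ x, q x * klFun (p x / q x) ∂μ ≤ 2 * B * ∫ x, (√(p x) - √(q x)) ^ 2 ∂μ := by
  rw [← integral_const_mul]
  refine integral_mono_ae (integrable_mul_klFun_div hp hq hp0 hq0 hB hB1)
    ((integrable_sqrt_sub_sqrt_sq hp hq hp0 (hq0.mono fun _ ↦ le_of_lt)).const_mul _) ?_
  filter_upwards [hp0, hq0, hB] with x hpx hqx hBx using mul_klFun_div_le hpx hqx hBx hB1

end Densities

theorem kl_le_two_hellinger_mul_essSup_general
    {Ω : Type*} [MeasurableSpace Ω] (μ : Measure Ω) (p q : Ω → ℝ)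
    (hp0 : ∀ x, 0 ≤ p x) (hq0 : ∀ᵐ x ∂μ, 0 < q x)
    (hpint : ∫ x, p x ∂μ = 1) (hqint : ∫ x, q x ∂μ = 1)
    (hbdd : ∃ B : ℝ, ∀ᵐ x ∂μ, p x / q x ≤ B) :
    ∫ x, p x * Real.log (p x / q x) ∂μ ≤
      2 * (∫ x, (Real.sqrt (p x) - Real.sqrt (q x)) ^ 2 ∂μ) *
        essSup (fun x => p x / q x) μ := by
  have hpi : Integrable p μ := .of_integral_ne_zero (by simp [hpint])
  have hqi : Integrable q μ := .of_integral_ne_zero (by simp [hqint])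
  have hB : ∀ᵐ x ∂μ, p x / q x ≤ essSup (fun x ↦ p x / q x) μ :=
    hbdd.elim fun B hB ↦ ae_le_essSup ⟨B, hB⟩
  have hB1 := one_le_of_ae_div_le hpi hqi hq0 hpint hqint hB
  have hp0' : ∀ᵐ x ∂μ, 0 ≤ p x := ae_of_all _ hp0
  rw [integral_mul_log_div_eq_integral_mul_klFun hpi hqi hq0 (hpint.trans hqint.symm)
    (integrable_mul_klFun_div hpi hqi hp0' hq0 hB hB1)]
  exact (integral_mul_klFun_div_le hpi hqi hp0' hq0 hB hB1).trans_eq (by ring)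

/-- If `p` and `q` are probability densities with `p/q` essentially bounded, then
the Kullback-Leibler divergence satisfies `K(p,q) ≤ 2 h²(p,q) · ‖p/q‖_∞`. -/
theorem kl_le_two_hellinger_mul_essSup
    {Ω : Type*} [MeasurableSpace Ω] (μ : Measure Ω) (p q : Ω → ℝ)
    (hp : Measurable p) (hq : Measurable q)
    (hp0 : ∀ x, 0 ≤ p x) (hq0 : ∀ᵐ x ∂μ, 0 < q x)
    (hpint : ∫ x, p x ∂μ = 1) (hqint : ∫ x, q x ∂μ = 1)
    (hbdd : ∃ B : ℝ, ∀ᵐ x ∂μ, p x / q x ≤ B) :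
    ∫ x, p x * Real.log (p x / q x) ∂μ ≤
      2 * (∫ x, (Real.sqrt (p x) - Real.sqrt (q x)) ^ 2 ∂μ) *
        essSup (fun x => p x / q x) μ :=
  kl_le_two_hellinger_mul_essSup_general μ p q hp0 hq0 hpint hqint hbdd
end

section
/- If log Ψ is Lipschitz with constant L, then the normalized densities p_w = Ψ(w)/∫Ψ(w) satisfy ‖p_{w₁} − p_{w₂}‖₁ ≤ 2L‖w₁ − w₂‖_∞ · exp(L‖w₁ − w₂‖_∞). -/
/-!
Writing `Ψ (w₂ x) = Ψ (w₁ x) * exp a` with `|a| ≤ L D`, the Lipschitz bound on `log Ψ` gives the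
relative bound `|Ψ (w₁ x) - Ψ (w₂ x)| ≤ K Ψ (w₁ x)` with `K = L D exp (L D)`. For nonnegative
integrable `f`, `g` the normalizations differ in `L¹` by at most `2 ‖f - g‖₁ / ∫ f`: one `‖f - g‖₁`
from the numerators and one from the normalizing constants, since `|∫ f - ∫ g| ≤ ‖f - g‖₁`.
-/

open MeasureTheory Real

lemma abs_exp_sub_one_le_abs_mul_exp_abs (a : ℝ) : |exp a - 1| ≤ |a| * exp |a| := by
  rcases le_total 0 a with ha | ha
  · rw [abs_of_nonneg ha, abs_of_nonneg (by linarith [add_one_le_exp a])]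
    have hinv : exp (-a) * exp a = 1 := by rw [← exp_add, neg_add_cancel, exp_zero]
    nlinarith [add_one_le_exp (-a), exp_pos a]
  · rw [abs_of_nonpos ha, abs_of_nonpos (by linarith [exp_le_one_iff.2 ha])]
    nlinarith [add_one_le_exp a, one_le_exp (neg_nonneg.2 ha)]

lemma LipschitzWith.abs_sub_le_of_log {X : Type*} [PseudoMetricSpace X] {Ψ : X → ℝ} {L : NNReal}
    (hLip : LipschitzWith L (fun x => log (Ψ x))) (hΨ : ∀ x, 0 < Ψ x) (x y : X) :
    |Ψ x - Ψ y| ≤ L * dist x y * exp (L * dist x y) * Ψ x := by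
  set a := log (Ψ y) - log (Ψ x)
  have ha : |a| ≤ L * dist x y := by
    simpa only [Real.dist_eq, dist_comm y x] using hLip.dist_le_mul y x
  have hy : Ψ y = Ψ x * exp a := by
    rw [exp_sub, exp_log (hΨ x), exp_log (hΨ y), mul_div_cancel₀ _ (hΨ x).ne']
  calc |Ψ x - Ψ y| = |exp a - 1| * Ψ x := by
        rw [hy, show Ψ x - Ψ x * exp a = -((exp a - 1) * Ψ x) by ring, abs_neg, abs_mul,
          abs_of_pos (hΨ x)]
    _ ≤ |a| * exp |a| * Ψ x :=
        mul_le_mul_of_nonneg_right (abs_exp_sub_one_le_abs_mul_exp_abs a) (hΨ x).le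
    _ ≤ L * dist x y * exp (L * dist x y) * Ψ x := by gcongr; exact (hΨ x).le

section Normalization

variable {α : Type*} [MeasurableSpace α] {μ : Measure α} {f g : α → ℝ}

lemma integral_pos_of_forall_pos [NeZero μ] (hf : Integrable f μ) (hpos : ∀ x, 0 < f x) :
    0 < ∫ x, f x ∂μ := by
  rw [integral_pos_iff_support_of_nonneg (fun x => (hpos x).le) hf,
    Function.support_eq_univ fun x => (hpos x).ne']
  exact Measure.measure_univ_pos.2 (NeZero.ne μ)

lemma integral_abs_div_integral_sub_div_integral_le (hf : Integrable f μ) (hg : Integrable g μ)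
    (hg0 : 0 ≤ᵐ[μ] g) (hI : 0 < ∫ x, f x ∂μ) :
    ∫ x, |f x / ∫ y, f y ∂μ - g x / ∫ y, g y ∂μ| ∂μ ≤
      2 * (∫ x, |f x - g x| ∂μ) / ∫ x, f x ∂μ := by
  set I₁ := ∫ y, f y ∂μ
  set I₂ := ∫ y, g y ∂μ
  set c := |I₁⁻¹ - I₂⁻¹|
  have hpt : ∀ᵐ x ∂μ, |f x / I₁ - g x / I₂| ≤ |f x - g x| / I₁ + c * g x := by
    filter_upwards [hg0] with x hx
    calc |f x / I₁ - g x / I₂| = |(f x - g x) / I₁ + (I₁⁻¹ - I₂⁻¹) * g x| := by ring_nf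
      _ ≤ |(f x - g x) / I₁| + |(I₁⁻¹ - I₂⁻¹) * g x| := abs_add_le _ _
      _ = |f x - g x| / I₁ + c * g x := by rw [abs_div, abs_of_pos hI, abs_mul, abs_of_nonneg hx]
  have hc : c * I₂ ≤ |I₁ - I₂| / I₁ := by
    have hI₂ : 0 ≤ I₂ := integral_nonneg_of_ae hg0
    rcases hI₂.eq_or_lt with h0 | h0
    · rw [← h0, mul_zero]; positivity
    · have : (I₁⁻¹ - I₂⁻¹) * I₂ = (I₂ - I₁) / I₁ := by field_simp
      refine le_of_eq ?_
      calc c * I₂ = |(I₁⁻¹ - I₂⁻¹) * I₂| := by rw [abs_mul, abs_of_pos h0]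
        _ = |I₁ - I₂| / I₁ := by rw [this, abs_div, abs_of_pos hI, abs_sub_comm]
  have hdi : Integrable (fun x => |f x - g x|) μ := (hf.sub hg).abs
  have hdiff : |I₁ - I₂| ≤ ∫ x, |f x - g x| ∂μ := by
    rw [← integral_sub hf hg]; exact abs_integral_le_integral_abs
  calc ∫ x, |f x / I₁ - g x / I₂| ∂μ ≤ ∫ x, (|f x - g x| / I₁ + c * g x) ∂μ :=
        integral_mono_ae ((hf.div_const I₁).sub (hg.div_const I₂)).abs
          ((hdi.div_const I₁).add (hg.const_mul c)) hpt
    _ = (∫ x, |f x - g x| ∂μ) / I₁ + c * I₂ := by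
        rw [integral_add (hdi.div_const I₁) (hg.const_mul c), integral_div,
          integral_const_mul]
    _ ≤ (∫ x, |f x - g x| ∂μ) / I₁ + (∫ x, |f x - g x| ∂μ) / I₁ := by
        gcongr; exact hc.trans (by gcongr)
    _ = 2 * (∫ x, |f x - g x| ∂μ) / I₁ := by ring

end Normalization

/-- If `log Ψ` is Lipschitz with constant `L`, the normalized densities
`p_w = Ψ(w)/∫Ψ(w)` satisfy `‖p_{w₁} - p_{w₂}‖₁ ≤ 2 L ‖w₁-w₂‖_∞ exp(L ‖w₁-w₂‖_∞)`. -/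
theorem normalized_density_L1_bound_logLipschitz
    (Ψ : ℝ → ℝ) (hΨpos : ∀ t, 0 < Ψ t) (L : NNReal)
    (hLip : LipschitzWith L (fun t => Real.log (Ψ t)))
    (w₁ w₂ : ℝ → ℝ)
    (hi₁ : IntegrableOn (fun x => Ψ (w₁ x)) (Set.Icc (0:ℝ) 1))
    (hi₂ : IntegrableOn (fun x => Ψ (w₂ x)) (Set.Icc (0:ℝ) 1))
    (D : ℝ) (hD : ∀ x ∈ Set.Icc (0:ℝ) 1, |w₁ x - w₂ x| ≤ D) :
    ∫ x in Set.Icc (0:ℝ) 1,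
        |Ψ (w₁ x) / (∫ y in Set.Icc (0:ℝ) 1, Ψ (w₁ y)) -
          Ψ (w₂ x) / (∫ y in Set.Icc (0:ℝ) 1, Ψ (w₂ y))| ≤
      2 * L * D * Real.exp (L * D) := by
  set K := L * D * exp (L * D)
  have hD0 : 0 ≤ D := (abs_nonneg _).trans (hD 0 ⟨le_rfl, zero_le_one⟩)
  have hrel : ∀ x ∈ Set.Icc (0:ℝ) 1, |Ψ (w₁ x) - Ψ (w₂ x)| ≤ K * Ψ (w₁ x) := by
    intro x hx
    have hdist : dist (w₁ x) (w₂ x) ≤ D := hD x hx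
    calc |Ψ (w₁ x) - Ψ (w₂ x)|
        ≤ L * dist (w₁ x) (w₂ x) * exp (L * dist (w₁ x) (w₂ x)) * Ψ (w₁ x) :=
          hLip.abs_sub_le_of_log hΨpos _ _
      _ ≤ L * D * exp (L * D) * Ψ (w₁ x) := by gcongr; exact (hΨpos _).le
  have : NeZero (volume.restrict (Set.Icc (0:ℝ) 1)) := ⟨by simp⟩
  set I₁ := ∫ y in Set.Icc (0:ℝ) 1, Ψ (w₁ y)
  have hI₁ : 0 < I₁ := integral_pos_of_forall_pos hi₁ fun x => hΨpos _
  have hL1 : ∫ x in Set.Icc (0:ℝ) 1, |Ψ (w₁ x) - Ψ (w₂ x)| ≤ K * I₁ := by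
    rw [← integral_const_mul]
    exact setIntegral_mono_on (hi₁.sub hi₂).abs (hi₁.const_mul K) measurableSet_Icc hrel
  calc _ ≤ 2 * (∫ x in Set.Icc (0:ℝ) 1, |Ψ (w₁ x) - Ψ (w₂ x)|) / I₁ :=
        integral_abs_div_integral_sub_div_integral_le hi₁ hi₂
          (Filter.Eventually.of_forall fun x => (hΨpos _).le) hI₁
    _ ≤ 2 * (K * I₁) / I₁ := by gcongr
    _ = 2 * L * D * exp (L * D) := by field_simp; ring
end

section
/- For two Poisson distributions with means λ, μ ∈ (0,1], the squared Hellinger distance is bounded by the absolute difference of the means: h²(Poi(λ), Poi(μ)) ≤ |λ − μ|. -/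
open Real

/-- The Poisson probability mass function with mean `l` at `k`. -/
noncomputable def poiPMF (l : ℝ) (k : ℕ) : ℝ := Real.exp (-l) * l ^ k / (Nat.factorial k)

/-!
The Hellinger affinity of two Poisson laws is an exponential series:
`∑ √(p_k q_k) = exp (-(λ + μ) / 2) ∑ (√(λμ))^k / k! = exp (-(√λ - √μ)² / 2)`.
Hence `h² = 2 - 2 exp (-(√λ - √μ)² / 2) ≤ (√λ - √μ)² ≤ |λ - μ|`.
-/

open scoped Nat

theorem Real.hasSum_pow_div_factorial (x : ℝ) : HasSum (fun n ↦ x ^ n / n !) (exp x) := by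
  rw [exp_eq_exp_ℝ]
  exact NormedSpace.expSeries_div_hasSum_exp x

theorem Real.sqrt_pow {x : ℝ} (hx : 0 ≤ x) (n : ℕ) : √(x ^ n) = √x ^ n :=
  (sqrt_eq_iff_eq_sq (pow_nonneg hx n) (pow_nonneg (sqrt_nonneg x) n)).2 <| by
    rw [← pow_mul, mul_comm, pow_mul, sq_sqrt hx]

theorem sq_sqrt_sub_sqrt_le_abs_sub {a b : ℝ} (ha : 0 ≤ a) (hb : 0 ≤ b) :
    (√a - √b) ^ 2 ≤ |a - b| :=
  calc (√a - √b) ^ 2 = |√a - √b| * |√a - √b| := by rw [abs_mul_abs_self, sq]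
    _ ≤ |√a - √b| * |√a + √b| := by
      refine mul_le_mul_of_nonneg_left ?_ (abs_nonneg _)
      rw [abs_of_nonneg (add_nonneg (sqrt_nonneg a) (sqrt_nonneg b))]
      exact abs_sub_le_iff.2 ⟨by linarith [sqrt_nonneg b], by linarith [sqrt_nonneg a]⟩
    _ = |a - b| := by
      rw [← abs_mul]
      congr 1
      linear_combination sq_sqrt ha - sq_sqrt hb

theorem two_sub_two_mul_exp_neg_half_le (x : ℝ) : 2 - 2 * exp (-x / 2) ≤ x := by
  linarith [add_one_le_exp (-x / 2)]

section Poisson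

variable {l m : ℝ}

theorem poiPMF_nonneg (hl : 0 ≤ l) (k : ℕ) : 0 ≤ poiPMF l k := by
  unfold poiPMF
  positivity

theorem hasSum_poiPMF (l : ℝ) : HasSum (poiPMF l) 1 := by
  have h := (hasSum_pow_div_factorial l).mul_left (exp (-l))
  rw [← exp_add, neg_add_cancel, exp_zero] at h
  exact h.congr_fun fun k ↦ mul_div_assoc _ _ _

theorem sqrt_poiPMF (hl : 0 ≤ l) (k : ℕ) :
    √(poiPMF l k) = exp (-l / 2) * √l ^ k / √(k ! : ℝ) := by
  rw [poiPMF, sqrt_div' _ (Nat.cast_nonneg _), sqrt_mul' _ (pow_nonneg hl k), ← exp_half,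
    Real.sqrt_pow hl]

theorem sqrt_poiPMF_mul_sqrt_poiPMF (hl : 0 ≤ l) (hm : 0 ≤ m) (k : ℕ) :
    √(poiPMF l k) * √(poiPMF m k) = exp (-(l + m) / 2) * ((√l * √m) ^ k / k !) := by
  rw [sqrt_poiPMF hl, sqrt_poiPMF hm, div_mul_div_comm, mul_self_sqrt (Nat.cast_nonneg _),
    mul_mul_mul_comm, ← exp_add, mul_pow, mul_div_assoc]
  ring_nf

theorem hasSum_sqrt_poiPMF_mul_sqrt_poiPMF (hl : 0 ≤ l) (hm : 0 ≤ m) :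
    HasSum (fun k ↦ √(poiPMF l k) * √(poiPMF m k)) (exp (-(√l - √m) ^ 2 / 2)) := by
  have h := (hasSum_pow_div_factorial (√l * √m)).mul_left (exp (-(l + m) / 2))
  rw [← exp_add, show -(l + m) / 2 + √l * √m = -(√l - √m) ^ 2 / 2 by
    linear_combination (1 / 2 : ℝ) * (sq_sqrt hl + sq_sqrt hm)] at h
  exact h.congr_fun (sqrt_poiPMF_mul_sqrt_poiPMF hl hm)

theorem hasSum_sq_sqrt_poiPMF_sub_sqrt_poiPMF (hl : 0 ≤ l) (hm : 0 ≤ m) :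
    HasSum (fun k ↦ (√(poiPMF l k) - √(poiPMF m k)) ^ 2)
      (2 - 2 * exp (-(√l - √m) ^ 2 / 2)) := by
  have h := ((hasSum_poiPMF l).add (hasSum_poiPMF m)).sub
    ((hasSum_sqrt_poiPMF_mul_sqrt_poiPMF hl hm).mul_left 2)
  rw [one_add_one_eq_two] at h
  refine h.congr_fun fun k ↦ ?_
  rw [sub_sq, sq_sqrt (poiPMF_nonneg hl k), sq_sqrt (poiPMF_nonneg hm k)]
  ring

end Poisson

theorem hellinger_sq_poisson_le_of_le_one_general
    (lam mu : ℝ) (hlam0 : 0 < lam) (hmu0 : 0 < mu) :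
    ∑' k : ℕ, (Real.sqrt (poiPMF lam k) - Real.sqrt (poiPMF mu k)) ^ 2 ≤ |lam - mu| := by
  rw [(hasSum_sq_sqrt_poiPMF_sub_sqrt_poiPMF hlam0.le hmu0.le).tsum_eq]
  exact (two_sub_two_mul_exp_neg_half_le _).trans (sq_sqrt_sub_sqrt_le_abs_sub hlam0.le hmu0.le)

/-- For Poisson distributions with means `λ, μ ∈ (0,1]`,
`h²(Poi(λ), Poi(μ)) ≤ |λ - μ|`. -/
theorem hellinger_sq_poisson_le_of_le_one
    (lam mu : ℝ) (hlam0 : 0 < lam) (hlam : lam ≤ 1) (hmu0 : 0 < mu) (hmu : mu ≤ 1) :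
    ∑' k : ℕ, (Real.sqrt (poiPMF lam k) - Real.sqrt (poiPMF mu k)) ^ 2 ≤ |lam - mu| :=
  hellinger_sq_poisson_le_of_le_one_general lam mu hlam0 hmu0
end
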